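/- For positive reals c_σ, c_μ, b_σ, b_μ, define f(r) = √(c_σ² r² + b_σ²) − √(c_μ² r² + b_μ²) for r > 0. If (c_μ − c_σ)(c_μ² b_σ − c_σ² b_μ) ≥ 0 and (c_σ, b_σ) ≠ (c_μ, b_μ), then f is strictly monotone on (0, ∞); in particular f has at most one zero in (0, ∞). -/
import Mathlib

/-- Pointwise comparison: under the (strictified) sign condition,
`c2² √(c1²t²+b1²) < c1² √(c2²t²+b2²)` for `t > 0`. -/
lemma stmt0_pt (c1 c2 b1 b2 t : ℝ) (hc1 : 0 < c1) (hc2 : 0 < c2) (hb1 : 0 < b1) (hb2 : 0 < b2)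
    (hcc : c2 ≤ c1)
    (hle : c2 ^ 2 * b1 ≤ c1 ^ 2 * b2) (hst : c2 < c1 ∨ c2 ^ 2 * b1 < c1 ^ 2 * b2)
    (ht : 0 < t) :
    c2 ^ 2 * Real.sqrt (c1 ^ 2 * t ^ 2 + b1 ^ 2) <
      c1 ^ 2 * Real.sqrt (c2 ^ 2 * t ^ 2 + b2 ^ 2) := by
  have h1 : c2 ^ 2 * Real.sqrt (c1 ^ 2 * t ^ 2 + b1 ^ 2)
      = Real.sqrt (c2 ^ 4 * (c1 ^ 2 * t ^ 2 + b1 ^ 2)) := by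
    rw [Real.sqrt_mul (by positivity)]
    rw [show c2 ^ 4 = (c2 ^ 2) ^ 2 by ring, Real.sqrt_sq (by positivity)]
  have h2 : c1 ^ 2 * Real.sqrt (c2 ^ 2 * t ^ 2 + b2 ^ 2)
      = Real.sqrt (c1 ^ 4 * (c2 ^ 2 * t ^ 2 + b2 ^ 2)) := by
    rw [Real.sqrt_mul (by positivity)]
    rw [show c1 ^ 4 = (c1 ^ 2) ^ 2 by ring, Real.sqrt_sq (by positivity)]
  rw [h1, h2]
  apply Real.sqrt_lt_sqrt (by positivity)
  have hbsq : (c2 ^ 2 * b1) ^ 2 ≤ (c1 ^ 2 * b2) ^ 2 :=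
    pow_le_pow_left₀ (by positivity) hle 2
  have hcsq : c2 ^ 2 ≤ c1 ^ 2 := pow_le_pow_left₀ hc2.le hcc 2
  rcases hst with h | h
  · have hcsq' : c2 ^ 2 < c1 ^ 2 := by nlinarith
    nlinarith [mul_pos (mul_pos (mul_pos (pow_pos hc1 2) (pow_pos hc2 2)) (pow_pos ht 2))
      (sub_pos.mpr hcsq'), hbsq]
  · have hbsq' : (c2 ^ 2 * b1) ^ 2 < (c1 ^ 2 * b2) ^ 2 := by
      apply pow_lt_pow_left₀ h (by positivity)
      norm_num
    nlinarith [mul_nonneg (mul_nonneg (mul_nonneg (pow_pos hc1 2).le (pow_pos hc2 2).le)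
      (pow_pos ht 2).le) (sub_nonneg.mpr hcsq), hbsq']

/-- Strict monotonicity step under the strictified sign condition. -/
lemma stmt0_mono (c1 c2 b1 b2 : ℝ) (hc1 : 0 < c1) (hc2 : 0 < c2) (hb1 : 0 < b1) (hb2 : 0 < b2)
    (hcc : c2 ≤ c1)
    (hle : c2 ^ 2 * b1 ≤ c1 ^ 2 * b2) (hst : c2 < c1 ∨ c2 ^ 2 * b1 < c1 ^ 2 * b2) :
    StrictMonoOn (fun r => Real.sqrt (c1 ^ 2 * r ^ 2 + b1 ^ 2)
      - Real.sqrt (c2 ^ 2 * r ^ 2 + b2 ^ 2)) (Set.Ioi 0) := by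
  intro r hr s hs hrs
  simp only [Set.mem_Ioi] at hr hs
  simp only
  set Ar := Real.sqrt (c1 ^ 2 * r ^ 2 + b1 ^ 2) with hAr
  set As := Real.sqrt (c1 ^ 2 * s ^ 2 + b1 ^ 2) with hAs
  set Br := Real.sqrt (c2 ^ 2 * r ^ 2 + b2 ^ 2) with hBr
  set Bs := Real.sqrt (c2 ^ 2 * s ^ 2 + b2 ^ 2) with hBs
  have hArp : 0 < Ar := Real.sqrt_pos.mpr (by positivity)
  have hAsp : 0 < As := Real.sqrt_pos.mpr (by positivity)
  have hBrp : 0 < Br := Real.sqrt_pos.mpr (by positivity)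
  have hBsp : 0 < Bs := Real.sqrt_pos.mpr (by positivity)
  have hArsq : Ar ^ 2 = c1 ^ 2 * r ^ 2 + b1 ^ 2 := Real.sq_sqrt (by positivity)
  have hAssq : As ^ 2 = c1 ^ 2 * s ^ 2 + b1 ^ 2 := Real.sq_sqrt (by positivity)
  have hBrsq : Br ^ 2 = c2 ^ 2 * r ^ 2 + b2 ^ 2 := Real.sq_sqrt (by positivity)
  have hBssq : Bs ^ 2 = c2 ^ 2 * s ^ 2 + b2 ^ 2 := Real.sq_sqrt (by positivity)
  have hptr := stmt0_pt c1 c2 b1 b2 r hc1 hc2 hb1 hb2 hcc hle hst hr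
  have hpts := stmt0_pt c1 c2 b1 b2 s hc1 hc2 hb1 hb2 hcc hle hst hs
  rw [← hAr, ← hBr] at hptr
  rw [← hAs, ← hBs] at hpts
  -- goal : Ar - Br < As - Bs
  have hA : (As - Ar) * (As + Ar) = c1 ^ 2 * (s ^ 2 - r ^ 2) := by
    linear_combination hAssq - hArsq
  have hB : (Bs - Br) * (Bs + Br) = c2 ^ 2 * (s ^ 2 - r ^ 2) := by
    linear_combination hBssq - hBrsq
  have hsr : 0 < s ^ 2 - r ^ 2 := by nlinarith
  have hsum : c2 ^ 2 * (As + Ar) < c1 ^ 2 * (Bs + Br) := by nlinarith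
  have key : (Bs - Br) * ((As + Ar) * (Bs + Br)) < (As - Ar) * ((As + Ar) * (Bs + Br)) := by
    calc (Bs - Br) * ((As + Ar) * (Bs + Br))
        = (c2 ^ 2 * (As + Ar)) * (s ^ 2 - r ^ 2) := by linear_combination (As + Ar) * hB
      _ < (c1 ^ 2 * (Bs + Br)) * (s ^ 2 - r ^ 2) := mul_lt_mul_of_pos_right hsum hsr
      _ = (As - Ar) * ((As + Ar) * (Bs + Br)) := by linear_combination -(Bs + Br) * hA
  have hpos : 0 < (As + Ar) * (Bs + Br) := by positivity
  have h5 : Bs - Br < As - Ar := lt_of_mul_lt_mul_right key hpos.le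
  linarith

/-- under the nondegeneracy condition, the function
`f(r) = √(cσ² r² + bσ²) − √(cμ² r² + bμ²)` is strictly monotone on `(0,∞)`,
hence has at most one zero there. -/
theorem stmt0 (cσ cμ bσ bμ : ℝ) (hcσ : 0 < cσ) (hcμ : 0 < cμ) (hbσ : 0 < bσ) (hbμ : 0 < bμ)
    (hnd : 0 ≤ (cμ - cσ) * (cμ ^ 2 * bσ - cσ ^ 2 * bμ)) (hne : (cσ, bσ) ≠ (cμ, bμ))
    (f : ℝ → ℝ)
    (hf : ∀ r, f r = Real.sqrt (cσ ^ 2 * r ^ 2 + bσ ^ 2) - Real.sqrt (cμ ^ 2 * r ^ 2 + bμ ^ 2)) :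
    (StrictMonoOn f (Set.Ioi 0) ∨ StrictAntiOn f (Set.Ioi 0)) ∧
      ∀ r ∈ Set.Ioi (0 : ℝ), ∀ s ∈ Set.Ioi (0 : ℝ), f r = 0 → f s = 0 → r = s := by
  have hfe : f = fun r => Real.sqrt (cσ ^ 2 * r ^ 2 + bσ ^ 2)
      - Real.sqrt (cμ ^ 2 * r ^ 2 + bμ ^ 2) := funext hf
  have hmain : StrictMonoOn f (Set.Ioi 0) ∨ StrictAntiOn f (Set.Ioi 0) := by
    rcases lt_trichotomy cσ cμ with hc | hc | hc
    · -- cσ < cμ : anti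
      right
      have hle : cσ ^ 2 * bμ ≤ cμ ^ 2 * bσ := by nlinarith
      have hm := stmt0_mono cμ cσ bμ bσ hcμ hcσ hbμ hbσ hc.le hle (Or.inl hc)
      intro r hr s hs hrs
      have h := hm hr hs hrs
      simp only [hfe]
      simp only at h
      linarith
    · -- cσ = cμ : bσ ≠ bμ
      have hb : bσ ≠ bμ := by
        intro h; exact hne (by rw [hc, h])
      rcases lt_or_gt_of_ne hb with hb' | hb'
      · left
        have hm := stmt0_mono cσ cμ bσ bμ hcσ hcμ hbσ hbμ (le_of_eq hc.symm)
          (by rw [hc]; exact mul_le_mul_of_nonneg_left hb'.le (by positivity))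
          (Or.inr (by rw [hc]; exact mul_lt_mul_of_pos_left hb' (by positivity)))
        rwa [hfe]
      · right
        have hm := stmt0_mono cμ cσ bμ bσ hcμ hcσ hbμ hbσ (le_of_eq hc)
          (by rw [hc]; exact mul_le_mul_of_nonneg_left hb'.le (by positivity))
          (Or.inr (by rw [hc]; exact mul_lt_mul_of_pos_left hb' (by positivity)))
        intro r hr s hs hrs
        have h := hm hr hs hrs
        simp only [hfe]
        simp only at h
        linarith
    · -- cμ < cσ : mono
      left
      have hle : cμ ^ 2 * bσ ≤ cσ ^ 2 * bμ := by nlinarith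
      have hm := stmt0_mono cσ cμ bσ bμ hcσ hcμ hbσ hbμ hc.le hle (Or.inl hc)
      rwa [hfe]
  refine ⟨hmain, ?_⟩
  intro r hr s hs hfr hfs
  rcases hmain with h | h
  · exact h.injOn hr hs (by rw [hfr, hfs])
  · exact h.injOn hr hs (by rw [hfr, hfs])
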